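/- arXiv:2012.12574 — 2 statements merged into one kernel-verified Lean document; each statement's English description precedes it below -/
import Mathlib

section
/- The point x₀ is a critical point of the Robin function, i.e. ∇γ̃(x₀) = 0, if and only if T''(x₀) = 0. -/
/-!
Near `x₀` the Robin function is `-(1/2π) log (1 - |T|²) + (1/2π) Re log (T' / T'(x₀))` up to a
constant. The first term has vanishing gradient at `x₀` because `T x₀ = 0`, and the gradient of
`Re h` for a holomorphic `h` is `conj h'`; hence `∇γ̃(x₀) = (1/2π) conj (T''(x₀) / T'(x₀))`.
This vanishes exactly when `T''(x₀) = 0` because `T'(x₀) ≠ 0`: if the derivative of an analytic `f`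
vanished at `x₀`, then `f - f x₀ = φⁿ` with `n ≥ 2` and `φ` a local coordinate at `x₀`, so `f`
would be `n`-to-one near `x₀`.
-/

open Complex

/-- For a `C¹` real-valued function `f` on `ℂ ≃ ℝ²`, the gradient `∇f = ∂₁f + i∂₂f ∈ ℂ`. -/
noncomputable def grad (f : ℂ → ℝ) (x : ℂ) : ℂ :=
  (fderiv ℝ f x 1 : ℂ) + Complex.I * (fderiv ℝ f x Complex.I)

/-- The Robin function `γ̃(x) = -(1/(2π))·log(1 - |T(x)|²) + (1/(2π))·log|T'(x)|`. -/
noncomputable def robin (T : ℂ → ℂ) (x : ℂ) : ℝ :=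
  -(2 * Real.pi)⁻¹ * Real.log (1 - ‖T x‖ ^ 2)
    + (2 * Real.pi)⁻¹ * Real.log ‖deriv T x‖

open ComplexConjugate Filter Topology Set

lemma exists_ne_pow_eq_pow_of_mem_nhds_zero {n : ℕ} (hn : 2 ≤ n) {s : Set ℂ} (hs : s ∈ 𝓝 0) :
    ∃ a ∈ s, ∃ b ∈ s, a ≠ b ∧ a ^ n = b ^ n := by
  have hζ := Complex.isPrimitiveRoot_exp n (by omega)
  set ζ := Complex.exp (2 * Real.pi * I / n)
  have hζs : ∀ᶠ w in 𝓝 0, ζ * w ∈ s :=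
    (continuous_const_mul ζ).tendsto' 0 0 (mul_zero ζ) hs
  have h : ∀ᶠ w in 𝓝[≠] (0 : ℂ), (w ∈ s ∧ ζ * w ∈ s) ∧ w ≠ 0 :=
    ((Filter.Eventually.and hs hζs).filter_mono nhdsWithin_le_nhds).and self_mem_nhdsWithin
  obtain ⟨w, ⟨hw, hζw⟩, hw0⟩ := h.exists
  refine ⟨w, hw, ζ * w, hζw, fun hwζ => ?_, by rw [mul_pow, hζ.pow_eq_one, one_mul]⟩
  exact hζ.ne_one (by omega) ((mul_eq_right₀ hw0).mp hwζ.symm)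

lemma not_injOn_of_eventually_sub_eq_pow {f φ : ℂ → ℂ} {x c : ℂ} {n : ℕ} (hn : 2 ≤ n)
    (hφ : HasStrictDerivAt φ c x) (hc : c ≠ 0) (hf : ∀ᶠ z in 𝓝 x, f z - f x = φ z ^ n)
    {U : Set ℂ} (hU : U ∈ 𝓝 x) : ¬ InjOn f U := by
  intro hinj
  have hφx : φ x = 0 :=
    (pow_eq_zero_iff (n := n) (by omega)).mp (by simpa using hf.self_of_nhds.symm)
  have hV : φ '' (U ∩ {z | f z - f x = φ z ^ n}) ∈ 𝓝 0 := by
    rw [← hφx, ← hφ.map_nhds_eq hc]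
    exact image_mem_map (inter_mem hU hf)
  obtain ⟨_, ⟨a, ⟨haU, ha⟩, rfl⟩, _, ⟨b, ⟨hbU, hb⟩, rfl⟩, hne, hpow⟩ :=
    exists_ne_pow_eq_pow_of_mem_nhds_zero hn hV
  exact hne (congrArg φ (hinj haU hbU (by rw [← sub_left_inj, ha, hb, hpow])))

lemma AnalyticAt.exists_pow_eq {g : ℂ → ℂ} {x : ℂ} (hg : AnalyticAt ℂ g x) (hgx : g x ≠ 0)
    {n : ℕ} (hn : n ≠ 0) : ∃ ψ : ℂ → ℂ, AnalyticAt ℂ ψ x ∧ ∀ z, ψ z ^ n = g z := by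
  refine ⟨fun z => g x ^ (n⁻¹ : ℂ) * (g z / g x) ^ (n⁻¹ : ℂ), ?_, fun z => ?_⟩
  · exact analyticAt_const.mul ((hg.div_const).cpow analyticAt_const (by simp [hgx]))
  · rw [mul_pow, cpow_nat_inv_pow _ hn, cpow_nat_inv_pow _ hn, mul_div_cancel₀ _ hgx]

lemma AnalyticAt.not_injOn_of_analyticOrderAt_eq {f : ℂ → ℂ} {x : ℂ} (hf : AnalyticAt ℂ f x)
    {n : ℕ} (hn : 2 ≤ n) (hord : analyticOrderAt (f · - f x) x = n) {U : Set ℂ} (hU : U ∈ 𝓝 x) :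
    ¬ InjOn f U := by
  obtain ⟨g, hg, hgx, hfg⟩ := ((hf.sub analyticAt_const).analyticOrderAt_eq_natCast).mp hord
  obtain ⟨ψ, hψ, hψg⟩ := hg.exists_pow_eq hgx (n := n) (by omega)
  have hψx : ψ x ≠ 0 := fun h => hgx (by rw [← hψg, h, zero_pow (by omega)])
  have hφ : HasStrictDerivAt (fun z => (z - x) * ψ z) (ψ x) x := by
    simpa using HasStrictDerivAt.fun_mul ((hasStrictDerivAt_id x).sub_const x) hψ.hasStrictDerivAt
  refine not_injOn_of_eventually_sub_eq_pow hn hφ hψx ?_ hU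
  filter_upwards [hfg] with z hz
  rw [show f z - f x = _ from hz, smul_eq_mul, mul_pow, hψg]

lemma AnalyticAt.deriv_ne_zero_of_injOn {f : ℂ → ℂ} {x : ℂ} (hf : AnalyticAt ℂ f x)
    {U : Set ℂ} (hU : U ∈ 𝓝 x) (hinj : InjOn f U) : deriv f x ≠ 0 := by
  intro hf'
  have hord : 2 ≤ analyticOrderAt (f · - f x) x := by
    rw [← hf.analyticOrderAt_deriv_add_one]
    have : 1 ≤ analyticOrderAt (deriv f) x :=
      Order.one_le_iff_ne_zero.mpr (analyticOrderAt_ne_zero.mpr ⟨hf.deriv, hf'⟩)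
    exact add_le_add_left this 1
  cases h : analyticOrderAt (f · - f x) x with
  | top =>
    rw [analyticOrderAt_eq_top] at h
    have h' : ∀ᶠ z in 𝓝[≠] x, (z ∈ U ∧ f z - f x = 0) ∧ z ≠ x :=
      ((Filter.Eventually.and hU h).filter_mono nhdsWithin_le_nhds).and self_mem_nhdsWithin
    obtain ⟨z, ⟨hzU, hz⟩, hzx⟩ := h'.exists
    exact hzx (hinj hzU (mem_of_mem_nhds hU) (sub_eq_zero.mp hz))
  | coe n =>
    exact hf.not_injOn_of_analyticOrderAt_eq (by exact_mod_cast h ▸ hord) h hU hinj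

lemma hasFDerivAt_log_one_sub_norm_sq_of_eq_zero {E F : Type*} [NormedAddCommGroup E]
    [NormedSpace ℝ E] [NormedAddCommGroup F] [InnerProductSpace ℝ F] {T : E → F} {x : E}
    (hT : DifferentiableAt ℝ T x) (hTx : T x = 0) :
    HasFDerivAt (fun y => Real.log (1 - ‖T y‖ ^ 2)) (0 : E →L[ℝ] ℝ) x := by
  simpa [hTx] using (hT.hasFDerivAt.norm_sq.const_sub 1).log (by simp [hTx])

lemma hasFDerivAt_log_norm {g : ℂ → ℂ} {g' x : ℂ} (hg : HasDerivAt g g' x) (hgx : g x ≠ 0) :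
    HasFDerivAt (fun z => Real.log ‖g z‖) (reCLM ∘L ((g' / g x) • (1 : ℂ →L[ℝ] ℂ))) x := by
  have hlog : HasDerivAt (fun z => log (g z / g x)) (g' / g x) x := by
    simpa [hgx] using (hg.div_const (g x)).clog (by simp [hgx])
  refine (reCLM.hasFDerivAt.comp x hlog.complexToReal_fderiv).add_const (Real.log ‖g x‖)
    |>.congr_of_eventuallyEq ?_
  filter_upwards [hg.continuousAt.eventually_ne hgx] with z hz
  simp [log_re, Real.log_div (norm_ne_zero_iff.mpr hz) (norm_ne_zero_iff.mpr hgx)]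

lemma grad_robin_of_eq_zero {T : ℂ → ℂ} {x : ℂ} (hT' : DifferentiableAt ℂ (deriv T) x)
    (hne : deriv T x ≠ 0) (hTx : T x = 0) :
    grad (robin T) x = (2 * Real.pi)⁻¹ * conj (deriv (deriv T) x / deriv T x) := by
  have hA := hasFDerivAt_log_one_sub_norm_sq_of_eq_zero
    ((differentiableAt_of_deriv_ne_zero hne).restrictScalars ℝ) hTx
  have hB := hasFDerivAt_log_norm hT'.hasDerivAt hne
  have hrobin : HasFDerivAt (robin T) _ x := (hA.const_mul _).fun_add (hB.const_mul _)
  rw [grad, hrobin.fderiv]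
  generalize deriv (deriv T) x / deriv T x = m
  apply Complex.ext <;> simp

theorem stmt1_general
    (Ω : Set ℂ) (hΩo : IsOpen Ω)
    (x₀ : ℂ) (hx₀ : x₀ ∈ Ω)
    (T : ℂ → ℂ) (hTd : DifferentiableOn ℂ T Ω)
    (hTbij : Set.BijOn T Ω (Metric.ball 0 1))
    (hT0 : T x₀ = 0) :
    grad (robin T) x₀ = 0 ↔ iteratedDeriv 2 T x₀ = 0 := by
  have hT : AnalyticAt ℂ T x₀ := hTd.analyticAt (hΩo.mem_nhds hx₀)
  have hT' : deriv T x₀ ≠ 0 := hT.deriv_ne_zero_of_injOn (hΩo.mem_nhds hx₀) hTbij.injOn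
  rw [grad_robin_of_eq_zero hT.deriv.differentiableAt hT' hT0, iteratedDeriv_succ,
    iteratedDeriv_one]
  simp [hT', Real.pi_ne_zero]

/-- `x₀` is a critical point of the Robin function iff `T''(x₀) = 0`. -/
theorem stmt1
    (Ω : Set ℂ) (hΩo : IsOpen Ω) (hΩb : Bornology.IsBounded Ω)
    (hΩc : IsConnected Ω) (hΩsc : SimplyConnectedSpace Ω)
    (x₀ : ℂ) (hx₀ : x₀ ∈ Ω)
    (T : ℂ → ℂ) (hTd : DifferentiableOn ℂ T Ω)
    (hTbij : Set.BijOn T Ω (Metric.ball 0 1))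
    (hT0 : T x₀ = 0) :
    grad (robin T) x₀ = 0 ↔ iteratedDeriv 2 T x₀ = 0 :=
  stmt1_general Ω hΩo x₀ hx₀ T hTd hTbij hT0
end

section
/- Define N(x,y,z) = [T'(x)·(T(z) − T(y)) − T'(z)·(T(x) − T(y))]·(x − y)·(z − y) + (x − z)·(T(x) − T(y))·(T(z) − T(y)). Then there exist r > 0 and a function N₁ : D(x₀,r)³ → ℂ, holomorphic in each of its three variables, such that N(x,y,z) = (x − y)²·(z − y)²·(x − z)·N₁(x,y,z) for all x, y, z in the disk D(x₀,r) = {|w − x₀| < r}. Moreover, if T''(x₀) = 0, then N₁(x₀,x₀,x₀) = T'(x₀)·T'''(x₀)/3. -/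
/-!
Write `f[a, b, …]` for divided differences, realised by iterating `dslope`. Off the diagonals the
factorization is an identity between rational expressions in `x, y, z, f x, f y, f z, f' x, f' z`,
and on the diagonals both sides vanish. For holomorphic `f`, `dslope f a` is again holomorphic (the
singularity at `a` is removable), so divided differences are holomorphic in their last argument;
being symmetric, they are holomorphic in every argument, the repeated argument of `f[a,a,b,c]`
being handled by `f[a,a,b,c] = ∂ₐ f[b,c,a]`. Finally `f[c,…,c]` with `n + 1` entries is the Taylor
coefficient `f⁽ⁿ⁾(c)/n!`, so `N₁(c,c,c) = f'f'''/3 − (f'')²/4` at `c`.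
-/

open Function

section DividedDifferences

variable {𝕜 : Type*} [NontriviallyNormedField 𝕜] {f : 𝕜 → 𝕜} {a b : 𝕜}

theorem dslope_eq_div (f : 𝕜 → 𝕜) (h : b ≠ a) : dslope f a b = (f b - f a) / (b - a) := by
  rw [dslope_of_ne f h, slope_def_field]

theorem dslope_comm (f : 𝕜 → 𝕜) (a b : 𝕜) : dslope f a b = dslope f b a := by
  rcases eq_or_ne a b with rfl | h
  · rfl
  · rw [dslope_of_ne f h.symm, dslope_of_ne f h, slope_comm]

theorem deriv_dslope_of_ne (h : a ≠ b) (hf : DifferentiableAt 𝕜 f a) :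
    deriv (dslope f b) a = (deriv f a * (a - b) - (f a - f b)) / (a - b) ^ 2 := by
  have hslope : HasDerivAt (fun z => (f z - f b) / (z - b))
      ((deriv f a * (a - b) - (f a - f b) * 1) / (a - b) ^ 2) a :=
    (hf.hasDerivAt.sub_const (f b)).div ((hasDerivAt_id a).sub_const b) (sub_ne_zero.2 h)
  have hev : dslope f b =ᶠ[nhds a] fun z => (f z - f b) / (z - b) := by
    filter_upwards [eventually_ne_nhds h] with z hz using dslope_eq_div f hz
  rw [(hslope.congr_of_eventuallyEq hev).deriv, mul_one]

theorem dslope_dslope_comm (c : 𝕜) (ha : DifferentiableAt 𝕜 f a) (hb : DifferentiableAt 𝕜 f b) :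
    dslope (dslope f a) b c = dslope (dslope f b) a c := by
  rcases eq_or_ne a b with rfl | hab
  · rfl
  rcases eq_or_ne c a with rfl | hca
  · rw [dslope_same, deriv_dslope_of_ne hab ha, dslope_eq_div _ hab, dslope_same,
      dslope_eq_div f hab.symm]
    field_simp
    ring
  rcases eq_or_ne c b with rfl | hcb
  · rw [dslope_same, deriv_dslope_of_ne hab.symm hb, dslope_eq_div _ hab.symm, dslope_same,
      dslope_eq_div f hab]
    field_simp
    ring
  rw [dslope_eq_div (dslope f a) hcb, dslope_eq_div (dslope f b) hca, dslope_eq_div f hca,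
    dslope_eq_div f hcb, dslope_eq_div f hab.symm, dslope_eq_div f hab]
  field_simp
  ring

theorem iterate_dslope_self [CompleteSpace 𝕜] [CharZero 𝕜] (hf : AnalyticAt 𝕜 f a) (n : ℕ) :
    (swap dslope a)^[n] f a = iteratedDeriv n f a / n.factorial := by
  rw [← (hf.hasFPowerSeriesAt.has_fpower_series_iterate_dslope_fslope n).coeff_zero 1,
    ← FormalMultilinearSeries.coeff, FormalMultilinearSeries.coeff_iterate_fslope, zero_add,
    FormalMultilinearSeries.coeff_ofScalars]

/-- `f[x,y]·f[z,z,x,y] + f[y,z]·f[x,x,y,z] − f[x,y,z]²`, where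
`f[a₁, …, aₙ, b] = dslope (f[a₁, …, aₙ, ·]) aₙ b`. -/
noncomputable def dividedDiffN₁ (f : 𝕜 → 𝕜) (x y z : 𝕜) : 𝕜 :=
  dslope f x y * dslope (dslope (dslope f z) z) x y
    + dslope f y z * dslope (dslope (dslope f x) x) y z
    - dslope (dslope f x) y z ^ 2

theorem factorization_dividedDiffN₁ (f : 𝕜 → 𝕜) (x y z : 𝕜) :
    (deriv f x * (f z - f y) - deriv f z * (f x - f y)) * (x - y) * (z - y)
        + (x - z) * (f x - f y) * (f z - f y)
      = (x - y) ^ 2 * (z - y) ^ 2 * (x - z) * dividedDiffN₁ f x y z := by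
  rcases eq_or_ne x y with rfl | hxy
  · ring
  rcases eq_or_ne y z with rfl | hyz
  · ring
  rcases eq_or_ne x z with rfl | hxz
  · ring
  simp only [dividedDiffN₁, dslope_same, dslope_eq_div _ hyz, dslope_eq_div _ hxz,
    dslope_eq_div _ hxy.symm, dslope_eq_div _ hyz.symm, dslope_eq_div _ hxz.symm]
  field_simp
  ring

theorem dividedDiffN₁_self [CompleteSpace 𝕜] [CharZero 𝕜] {c : 𝕜} (hf : AnalyticAt 𝕜 f c) :
    dividedDiffN₁ f c c c = deriv f c * iteratedDeriv 3 f c / 3 - iteratedDeriv 2 f c ^ 2 / 4 := by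
  have h1 := iterate_dslope_self hf 1
  have h2 := iterate_dslope_self hf 2
  have h3 := iterate_dslope_self hf 3
  simp only [iterate_succ_apply', iterate_zero_apply, swap, iteratedDeriv_one] at h1 h2 h3
  rw [dividedDiffN₁, h1, h2, h3]
  norm_num
  ring

end DividedDifferences

section Holomorphic

variable {U : Set ℂ} {f : ℂ → ℂ} {a b c : ℂ}

theorem DifferentiableOn.dslope (hf : DifferentiableOn ℂ f U) (hU : IsOpen U) (ha : a ∈ U) :
    DifferentiableOn ℂ (dslope f a) U :=
  (Complex.differentiableOn_dslope (hU.mem_nhds ha)).2 hf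

theorem dslope_dslope_dslope_self_eq_deriv (hf : DifferentiableOn ℂ f U) (hU : IsOpen U)
    (ha : a ∈ U) (hb : b ∈ U) (hc : c ∈ U) :
    dslope (dslope (dslope f a) a) b c = deriv (dslope (dslope f b) c) a := by
  have hd {g : ℂ → ℂ} (hg : DifferentiableOn ℂ g U) {z : ℂ} (hz : z ∈ U) :
      DifferentiableAt ℂ g z := hg.differentiableAt (hU.mem_nhds hz)
  have hfa := hf.dslope hU ha
  have hfb := hf.dslope hU hb
  have hab : dslope (dslope f a) b = dslope (dslope f b) a :=
    funext fun u => dslope_dslope_comm u (hd hf ha) (hd hf hb)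
  rw [dslope_dslope_comm c (hd hfa ha) (hd hfa hb), hab, dslope_comm _ a c,
    dslope_dslope_comm a (hd hfb ha) (hd hfb hc), dslope_same]

theorem differentiableOn_dividedDiffN₁_left (hf : DifferentiableOn ℂ f U) (hU : IsOpen U)
    {y z : ℂ} (hy : y ∈ U) (hz : z ∈ U) :
    DifferentiableOn ℂ (fun x => dividedDiffN₁ f x y z) U := by
  have hfy := hf.dslope hU hy
  have hfyz := hfy.dslope hU hz
  refine ((hfy.mul (((hf.dslope hU hz).dslope hU hz).dslope hU hy)).add
    ((hfyz.deriv hU).const_mul (dslope f y z))).sub (hfyz.pow 2) |>.congr fun x hx => ?_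
  rw [dividedDiffN₁, dslope_comm f x y, dslope_comm _ x y,
    dslope_dslope_dslope_self_eq_deriv hf hU hx hy hz,
    dslope_dslope_comm z (hf.differentiableAt (hU.mem_nhds hx))
      (hf.differentiableAt (hU.mem_nhds hy)),
    dslope_comm (dslope f y) x z]
  rfl

theorem differentiableOn_dividedDiffN₁_middle (hf : DifferentiableOn ℂ f U) (hU : IsOpen U)
    {x z : ℂ} (hx : x ∈ U) (hz : z ∈ U) :
    DifferentiableOn ℂ (fun y => dividedDiffN₁ f x y z) U := by
  have hfx := hf.dslope hU hx
  have hfz := hf.dslope hU hz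
  refine ((hfx.mul ((hfz.dslope hU hz).dslope hU hx)).add
    (hfz.mul ((hfx.dslope hU hx).dslope hU hz))).sub
    ((hfx.dslope hU hz).pow 2) |>.congr fun y hy => ?_
  rw [dividedDiffN₁, dslope_comm f y z, dslope_comm _ y z, dslope_comm (dslope f x) y z]
  rfl

theorem differentiableOn_dividedDiffN₁_right (hf : DifferentiableOn ℂ f U) (hU : IsOpen U)
    {x y : ℂ} (hx : x ∈ U) (hy : y ∈ U) :
    DifferentiableOn ℂ (fun z => dividedDiffN₁ f x y z) U := by
  have hfx := hf.dslope hU hx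
  refine ((((hfx.dslope hU hy).deriv hU).const_mul (dslope f x y)).add
    ((hf.dslope hU hy).mul ((hfx.dslope hU hx).dslope hU hy))).sub
    ((hfx.dslope hU hy).pow 2) |>.congr fun z hz => ?_
  rw [dividedDiffN₁, dslope_dslope_dslope_self_eq_deriv hf hU hz hx hy]
  rfl

end Holomorphic

theorem stmt10_general
    (Ω : Set ℂ) (hΩo : IsOpen Ω)
    (x₀ : ℂ) (hx₀ : x₀ ∈ Ω)
    (T : ℂ → ℂ) (hTd : DifferentiableOn ℂ T Ω) :
    ∃ r > (0:ℝ), Metric.ball x₀ r ⊆ Ω ∧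
      ∃ N₁ : ℂ → ℂ → ℂ → ℂ,
        (∀ y ∈ Metric.ball x₀ r, ∀ z ∈ Metric.ball x₀ r,
          DifferentiableOn ℂ (fun x => N₁ x y z) (Metric.ball x₀ r)) ∧
        (∀ x ∈ Metric.ball x₀ r, ∀ z ∈ Metric.ball x₀ r,
          DifferentiableOn ℂ (fun y => N₁ x y z) (Metric.ball x₀ r)) ∧
        (∀ x ∈ Metric.ball x₀ r, ∀ y ∈ Metric.ball x₀ r,
          DifferentiableOn ℂ (fun z => N₁ x y z) (Metric.ball x₀ r)) ∧
        (∀ x ∈ Metric.ball x₀ r, ∀ y ∈ Metric.ball x₀ r, ∀ z ∈ Metric.ball x₀ r,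
          (deriv T x * (T z - T y) - deriv T z * (T x - T y)) * (x - y) * (z - y)
              + (x - z) * (T x - T y) * (T z - T y)
            = (x - y) ^ 2 * (z - y) ^ 2 * (x - z) * N₁ x y z) ∧
        (iteratedDeriv 2 T x₀ = 0 →
          N₁ x₀ x₀ x₀ = deriv T x₀ * iteratedDeriv 3 T x₀ / 3) := by
  obtain ⟨r, hr, hrΩ⟩ := Metric.isOpen_iff.1 hΩo x₀ hx₀
  have hT := hTd.mono hrΩ
  have hB : IsOpen (Metric.ball x₀ r) := Metric.isOpen_ball
  refine ⟨r, hr, hrΩ, dividedDiffN₁ T,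
    fun y hy z hz => differentiableOn_dividedDiffN₁_left hT hB hy hz,
    fun x hx z hz => differentiableOn_dividedDiffN₁_middle hT hB hx hz,
    fun x hx y hy => differentiableOn_dividedDiffN₁_right hT hB hx hy,
    fun x _ y _ z _ => factorization_dividedDiffN₁ T x y z, fun h2 => ?_⟩
  rw [dividedDiffN₁_self (hTd.analyticAt (hΩo.mem_nhds hx₀)), h2]
  ring

/-- the function
`N(x,y,z) = [T'(x)(T(z)−T(y)) − T'(z)(T(x)−T(y))]·(x−y)(z−y) + (x−z)(T(x)−T(y))(T(z)−T(y))`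
factors as `(x−y)²(z−y)²(x−z)·N₁(x,y,z)` with `N₁` holomorphic in each variable on a disk
around `x₀`; moreover if `T''(x₀) = 0` then `N₁(x₀,x₀,x₀) = T'(x₀)·T'''(x₀)/3`. -/
theorem stmt10
    (Ω : Set ℂ) (hΩo : IsOpen Ω) (hΩb : Bornology.IsBounded Ω)
    (hΩc : IsConnected Ω) (hΩsc : SimplyConnectedSpace Ω)
    (x₀ : ℂ) (hx₀ : x₀ ∈ Ω)
    (T : ℂ → ℂ) (hTd : DifferentiableOn ℂ T Ω)
    (hTbij : Set.BijOn T Ω (Metric.ball 0 1))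
    (hT0 : T x₀ = 0) :
    ∃ r > (0:ℝ), Metric.ball x₀ r ⊆ Ω ∧
      ∃ N₁ : ℂ → ℂ → ℂ → ℂ,
        (∀ y ∈ Metric.ball x₀ r, ∀ z ∈ Metric.ball x₀ r,
          DifferentiableOn ℂ (fun x => N₁ x y z) (Metric.ball x₀ r)) ∧
        (∀ x ∈ Metric.ball x₀ r, ∀ z ∈ Metric.ball x₀ r,
          DifferentiableOn ℂ (fun y => N₁ x y z) (Metric.ball x₀ r)) ∧
        (∀ x ∈ Metric.ball x₀ r, ∀ y ∈ Metric.ball x₀ r,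
          DifferentiableOn ℂ (fun z => N₁ x y z) (Metric.ball x₀ r)) ∧
        (∀ x ∈ Metric.ball x₀ r, ∀ y ∈ Metric.ball x₀ r, ∀ z ∈ Metric.ball x₀ r,
          (deriv T x * (T z - T y) - deriv T z * (T x - T y)) * (x - y) * (z - y)
              + (x - z) * (T x - T y) * (T z - T y)
            = (x - y) ^ 2 * (z - y) ^ 2 * (x - z) * N₁ x y z) ∧
        (iteratedDeriv 2 T x₀ = 0 →
          N₁ x₀ x₀ x₀ = deriv T x₀ * iteratedDeriv 3 T x₀ / 3) :=
  stmt10_general Ω hΩo x₀ hx₀ T hTd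
end
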